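/- Let T=(V,E) be a finite tree with |V| ≥ 2. Then for every nonempty proper subset Ω ⊊ V, |V|·|E(Ω)| < |E|·|Ω| (indeed |E(Ω)|/|Ω| ≤ 1 − 1/|Ω| < 1 − 1/|V| = |E|/|V|). Consequently, T admits a weight of constant curvature: there exists a weight ω on E with ω_xy·(1/m(x)+1/m(y)) = |V|/|E| for every edge {x,y}, i.e., with κ_e(ω) = 2/(|V|−1) for every edge e. -/

import Mathlib

open Finset

variable {V : Type*} [Fintype V] [DecidableEq V]

/-- The weighted vertex measure `m(x) = Σ_{y ∼ x} ω_{xy}`. -/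
noncomputable def vm (G : SimpleGraph V) [DecidableRel G.Adj] (w : Sym2 V → ℝ) (x : V) : ℝ :=
  ∑ y ∈ G.neighborFinset x, w s(x, y)

/-- The Lin–Lu–Yau curvature of an edge `e = {x,y}` on a graph of girth ≥ 6, given by the
explicit formula `κ_e(ω) = 2·ω_e·(1/m(x) + 1/m(y)) − 2`. -/
noncomputable def edgeKappa (G : SimpleGraph V) [DecidableRel G.Adj] (w : Sym2 V → ℝ) :
    Sym2 V → ℝ :=
  Sym2.lift ⟨fun x y => 2 * w s(x, y) * (1 / vm G w x + 1 / vm G w y) - 2, by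
    intro x y
    dsimp only
    rw [Sym2.eq_swap]
    ring⟩


open SimpleGraph

/-- The vertex set of the connected component of `x` in `T` minus the edge `e`. -/
def Bset (T : SimpleGraph V) (x : V) (e : Sym2 V) : Set V :=
  {v | (T.deleteEdges {e}).Reachable x v}

/-- The number of vertices on `x`'s side of the edge `e`. -/
noncomputable def tC (T : SimpleGraph V) (x : V) (e : Sym2 V) : ℕ :=
  (Bset T x e).ncard

/-- `Mw x = ∏_{e ∈ E} tC x e`, the product over all edges of the size of `x`'s side. -/
noncomputable def Mw (T : SimpleGraph V) [DecidableRel T.Adj] (x : V) : ℝ :=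
  ∏ e ∈ T.edgeFinset, (tC T x e : ℝ)

set_option linter.unusedSectionVars false

lemma aux_bridge (T : SimpleGraph V) (ht : T.IsAcyclic) {x y : V} (h : T.Adj x y) :
    ¬ (T.deleteEdges {s(x, y)}).Reachable x y :=
  (SimpleGraph.isBridge_iff.mp ((SimpleGraph.isAcyclic_iff_forall_adj_isBridge.mp ht) h))

lemma aux_self_mem (T : SimpleGraph V) (x : V) (e : Sym2 V) : x ∈ Bset T x e :=
  SimpleGraph.Reachable.refl x

lemma aux_cover (T : SimpleGraph V) (hc : T.Preconnected) {x y : V} (h : T.Adj x y) (v : V) :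
    v ∈ Bset T x s(x, y) ∨ v ∈ Bset T y s(x, y) := by
  suffices H : ∀ (u vv : V), T.Walk u vv →
      (u ∈ Bset T x s(x, y) ∨ u ∈ Bset T y s(x, y)) →
      (vv ∈ Bset T x s(x, y) ∨ vv ∈ Bset T y s(x, y)) by
    obtain ⟨p⟩ := hc x v
    exact H x v p (Or.inl (aux_self_mem T x _))
  intro u vv p
  induction p with
  | nil => exact id
  | @cons a b c hab q ih =>
    intro hu
    apply ih
    by_cases he : s(a, b) = s(x, y)
    · rw [Sym2.eq_iff] at he
      rcases he with ⟨rfl, rfl⟩ | ⟨rfl, rfl⟩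
      · exact Or.inr (aux_self_mem T b _)
      · exact Or.inl (aux_self_mem T b _)
    · have hadj : (T.deleteEdges {s(x, y)}).Adj a b := by
        rw [SimpleGraph.deleteEdges_adj]
        exact ⟨hab, by simpa using he⟩
      rcases hu with h1 | h1
      · exact Or.inl (h1.trans hadj.reachable)
      · exact Or.inr (h1.trans hadj.reachable)

lemma aux_not_mem (T : SimpleGraph V) (ht : T.IsAcyclic) {x y : V} (h : T.Adj x y) :
    x ∉ Bset T y s(x, y) := fun hr => aux_bridge T ht h hr.symm

lemma aux_tc_add (T : SimpleGraph V) (ht : T.IsTree) {x y : V} (h : T.Adj x y) :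
    tC T x s(x, y) + tC T y s(x, y) = Fintype.card V := by
  have hdisj : Disjoint (Bset T x s(x, y)) (Bset T y s(x, y)) := by
    rw [Set.disjoint_left]
    intro v hvx hvy
    exact aux_bridge T ht.2 h (hvx.trans hvy.symm)
  have hunion : Bset T x s(x, y) ∪ Bset T y s(x, y) = Set.univ := by
    ext v
    simp only [Set.mem_univ, iff_true, Set.mem_union]
    exact aux_cover T ht.1.preconnected h v
  rw [tC, tC, ← Set.ncard_union_eq hdisj (Set.toFinite _) (Set.toFinite _), hunion,
    Set.ncard_univ, Nat.card_eq_fintype_card]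

lemma aux_tc_eq (T : SimpleGraph V) {x y : V} (h : T.Adj x y) {e' : Sym2 V}
    (hne : e' ≠ s(x, y)) : Bset T x e' = Bset T y e' := by
  have hadj : (T.deleteEdges {e'}).Adj x y := by
    rw [SimpleGraph.deleteEdges_adj]
    exact ⟨h, by simpa using fun hh => hne hh.symm⟩
  ext v
  constructor
  · intro hv; exact hadj.symm.reachable.trans hv
  · intro hv; exact hadj.reachable.trans hv

lemma aux_walk_avoid (T : SimpleGraph V) (ht : T.IsAcyclic) {x y v : V} (h : T.Adj x y)
    (hv : v ∈ Bset T y s(x, y)) :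
    ∃ p : (T.deleteEdges {s(x, y)}).Walk y v, x ∉ p.support := by
  obtain ⟨p⟩ := hv
  by_cases hx : x ∈ p.support
  · exact absurd (SimpleGraph.Reachable.symm ⟨p.takeUntil x hx⟩) (aux_bridge T ht h)
  · exact ⟨p, hx⟩

lemma aux_nbr_disjoint (T : SimpleGraph V) (ht : T.IsAcyclic) {x y z v : V}
    (hy : T.Adj x y) (hz : T.Adj x z) (hyz : y ≠ z)
    (h1 : v ∈ Bset T y s(x, y)) (h2 : v ∈ Bset T z s(x, z)) : False := by
  obtain ⟨p, hp⟩ := aux_walk_avoid T ht hy h1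
  obtain ⟨q, hq⟩ := aux_walk_avoid T ht hz h2
  have hqe : ∀ e ∈ q.edges, e ∈ (T.deleteEdges {s(x, y)}).edgeSet := by
    intro e heq
    have heT := q.edges_subset_edgeSet heq
    rw [SimpleGraph.edgeSet_deleteEdges] at heT ⊢
    refine ⟨heT.1, ?_⟩
    simp only [Set.mem_singleton_iff]
    rintro rfl
    exact hq (q.fst_mem_support_of_mem_edges heq)
  have hadj : (T.deleteEdges {s(x, y)}).Adj z x := by
    rw [SimpleGraph.deleteEdges_adj]
    refine ⟨hz.symm, ?_⟩
    simp only [Set.mem_singleton_iff]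
    intro hh
    rw [Sym2.eq_iff] at hh
    rcases hh with ⟨h1, _⟩ | ⟨h1, _⟩
    · exact hz.ne h1.symm
    · exact hyz h1.symm
  exact aux_bridge T ht hy
    (SimpleGraph.Reachable.symm ⟨(p.append (q.transfer _ hqe).reverse).append hadj.toWalk⟩)

lemma aux_nbr_cover (T : SimpleGraph V) (hc : T.Preconnected) (x v : V) (hv : v ≠ x) :
    ∃ y, T.Adj x y ∧ v ∈ Bset T y s(x, y) := by
  suffices H : ∀ (u vv : V), T.Walk u vv →
      (u = x ∨ ∃ y, T.Adj x y ∧ u ∈ Bset T y s(x, y)) →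
      (vv = x ∨ ∃ y, T.Adj x y ∧ vv ∈ Bset T y s(x, y)) by
    rcases H x v (hc x v).some (Or.inl rfl) with rfl | h
    · exact absurd rfl hv
    · exact h
  intro u vv p
  induction p with
  | nil => exact id
  | @cons a b c hab q ih =>
    intro hu
    apply ih
    by_cases hbx : b = x
    · exact Or.inl hbx
    rcases hu with rfl | ⟨y, hy, hr⟩
    · exact Or.inr ⟨b, hab, aux_self_mem T b _⟩
    · by_cases hax : a = x
      · subst hax
        exact Or.inr ⟨b, hab, aux_self_mem T b _⟩
      · have hne : s(a, b) ≠ s(x, y) := by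
          intro hh
          have hx2 : x ∈ s(a, b) := by
            rw [hh]; exact Sym2.mem_mk_left x y
          rcases Sym2.mem_iff.mp hx2 with rfl | rfl
          · exact hax rfl
          · exact hbx rfl
        have hadj : (T.deleteEdges {s(x, y)}).Adj a b := by
          rw [SimpleGraph.deleteEdges_adj]
          exact ⟨hab, by simpa using hne⟩
        exact Or.inr ⟨y, hy, hr.trans hadj.reachable⟩

lemma aux_sum_tc (T : SimpleGraph V) [DecidableRel T.Adj] (ht : T.IsTree) (x : V) :
    (∑ y ∈ T.neighborFinset x, tC T y s(x, y)) + 1 = Fintype.card V := by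
  classical
  have key : (T.neighborFinset x).biUnion
      (fun y => (Set.toFinite (Bset T y s(x, y))).toFinset) = Finset.univ.erase x := by
    ext v
    simp only [Finset.mem_biUnion, SimpleGraph.mem_neighborFinset, Set.Finite.mem_toFinset,
      Finset.mem_erase, Finset.mem_univ, and_true]
    constructor
    · rintro ⟨y, hy, hv⟩
      rintro rfl
      exact aux_not_mem T ht.2 hy hv
    · intro hvx
      exact aux_nbr_cover T ht.1.preconnected x v hvx
  have hdisj : ∀ y ∈ T.neighborFinset x, ∀ z ∈ T.neighborFinset x, y ≠ z →
      Disjoint ((Set.toFinite (Bset T y s(x, y))).toFinset)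
        ((Set.toFinite (Bset T z s(x, z))).toFinset) := by
    intro y hy z hz hyz
    rw [Finset.disjoint_left]
    intro v hv1 hv2
    rw [Set.Finite.mem_toFinset] at hv1 hv2
    have hy' : T.Adj x y := by simpa using hy
    have hz' : T.Adj x z := by simpa using hz
    exact aux_nbr_disjoint T ht.2 hy' hz' hyz hv1 hv2
  have hcard := Finset.card_biUnion hdisj
  rw [key] at hcard
  have h2 : ∀ y ∈ T.neighborFinset x,
      ((Set.toFinite (Bset T y s(x, y))).toFinset).card = tC T y s(x, y) := by
    intro y _
    rw [tC, Set.ncard_eq_toFinset_card _ (Set.toFinite _)]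
  rw [Finset.sum_congr rfl h2] at hcard
  rw [← hcard, Finset.card_erase_of_mem (Finset.mem_univ x), Finset.card_univ]
  have : 0 < Fintype.card V := Fintype.card_pos_iff.mpr ⟨x⟩
  omega

lemma aux_tc_pos (T : SimpleGraph V) (x : V) (e : Sym2 V) : 0 < tC T x e := by
  rw [tC, Set.ncard_pos (Set.toFinite _)]
  exact ⟨x, aux_self_mem T x e⟩

lemma aux_Mw_pos (T : SimpleGraph V) [DecidableRel T.Adj] (x : V) : 0 < Mw T x :=
  Finset.prod_pos fun e _ => by exact_mod_cast aux_tc_pos T x e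

lemma aux_Msymm (T : SimpleGraph V) [DecidableRel T.Adj] {x y : V} (h : T.Adj x y) :
    Mw T x * (tC T y s(x, y) : ℝ) = Mw T y * (tC T x s(x, y) : ℝ) := by
  have he : s(x, y) ∈ T.edgeFinset := by
    rw [SimpleGraph.mem_edgeFinset, SimpleGraph.mem_edgeSet]; exact h
  have hP : ∀ e' ∈ T.edgeFinset.erase s(x, y), (tC T x e' : ℝ) = (tC T y e' : ℝ) := by
    intro e' he'
    rw [Finset.mem_erase] at he'
    rw [tC, tC, aux_tc_eq T h he'.1]
  rw [Mw, Mw, ← Finset.mul_prod_erase _ _ he, ← Finset.mul_prod_erase _ _ he,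
    Finset.prod_congr rfl hP]
  ring

lemma aux_dist_lt (T : SimpleGraph V) (ht : T.IsTree) {u v r : V} (h : T.Adj u v)
    (hr : r ∈ Bset T u s(u, v)) : T.dist r u < T.dist r v := by
  obtain ⟨p, hp⟩ := (ht.1.preconnected r v).exists_walk_length_eq_dist
  have hmem : s(u, v) ∈ p.edges := by
    by_contra hne
    have hpe : ∀ e ∈ p.edges, e ∈ (T.deleteEdges {s(u, v)}).edgeSet := by
      intro e hep
      rw [SimpleGraph.edgeSet_deleteEdges]
      refine ⟨p.edges_subset_edgeSet hep, ?_⟩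
      simp only [Set.mem_singleton_iff]
      rintro rfl
      exact hne hep
    have hrv : (T.deleteEdges {s(u, v)}).Reachable r v := ⟨p.transfer _ hpe⟩
    exact aux_bridge T ht.2 h (hr.trans hrv)
  have hu : u ∈ p.support := p.fst_mem_support_of_mem_edges hmem
  have h1 : T.dist r u ≤ (p.takeUntil u hu).length := SimpleGraph.dist_le _
  have h2 : (p.takeUntil u hu).length + (p.dropUntil u hu).length = p.length := by
    rw [← SimpleGraph.Walk.length_append, SimpleGraph.Walk.take_spec]
  have h3 : (p.dropUntil u hu).length ≠ 0 := by
    intro h0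
    exact h.ne (SimpleGraph.Walk.eq_of_length_eq_zero h0)
  omega

lemma aux_exists_far (T : SimpleGraph V) (ht : T.IsTree) (r : V) {e : Sym2 V}
    (he : e ∈ T.edgeSet) : ∃ w u, T.Adj u w ∧ e = s(u, w) ∧ r ∈ Bset T u e := by
  revert he
  refine Sym2.ind (fun a b => ?_) e
  intro he
  rw [SimpleGraph.mem_edgeSet] at he
  rcases aux_cover T ht.1.preconnected he r with hra | hrb
  · exact ⟨b, a, he, rfl, hra⟩
  · exact ⟨a, b, he.symm, Sym2.eq_swap, hrb⟩

lemma aux_part1 (T : SimpleGraph V) [DecidableRel T.Adj] (ht : T.IsTree)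
    (Ω : Set V) (hne : Ω.Nonempty) (hproper : Ω ≠ Set.univ) :
    Fintype.card V * {e ∈ T.edgeSet | ∀ v ∈ e, v ∈ Ω}.ncard <
      T.edgeFinset.card * Ω.ncard := by
  classical
  obtain ⟨r, hrΩ⟩ : ∃ r, r ∉ Ω := by
    by_contra hc
    push_neg at hc
    exact hproper (Set.eq_univ_of_forall hc)
  obtain ⟨u0, hu0Ω, hu0min⟩ := Set.exists_min_image Ω (fun u => T.dist r u) (Set.toFinite Ω) hne
  set S : Set (Sym2 V) := {e ∈ T.edgeSet | ∀ v ∈ e, v ∈ Ω} with hS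
  set F : Sym2 V → V := fun e =>
    if h : ∃ w u, T.Adj u w ∧ e = s(u, w) ∧ r ∈ Bset T u e then h.choose else u0 with hF
  have hFspec : ∀ e ∈ S, ∃ u, T.Adj u (F e) ∧ e = s(u, F e) ∧ r ∈ Bset T u e := by
    intro e heS
    have hQ : ∃ w u, T.Adj u w ∧ e = s(u, w) ∧ r ∈ Bset T u e :=
      aux_exists_far T ht r heS.1
    rw [hF]
    simp only [dif_pos hQ]
    exact hQ.choose_spec
  have hmaps : ∀ e ∈ S, F e ∈ Ω \ {u0} := by
    intro e heS
    obtain ⟨u, hadj, heq, hrB⟩ := hFspec e heS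
    set b := F e with hb
    have hFΩ : b ∈ Ω := heS.2 b (by rw [heq]; exact Sym2.mem_mk_right u b)
    have huΩ : u ∈ Ω := heS.2 u (by rw [heq]; exact Sym2.mem_mk_left u b)
    refine ⟨hFΩ, ?_⟩
    simp only [Set.mem_singleton_iff]
    intro hFu0
    have hlt : T.dist r u < T.dist r b := aux_dist_lt T ht hadj (by rwa [← heq])
    have hmin := hu0min u huΩ
    rw [hFu0] at hlt
    omega
  have hinjOn : Set.InjOn F S := by
    intro e1 h1 e2 h2 hFeq
    obtain ⟨u1, ha1, heq1, hr1⟩ := hFspec e1 h1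
    obtain ⟨u2, ha2, heq2, hr2⟩ := hFspec e2 h2
    by_cases huu : u1 = u2
    · rw [heq1, heq2, hFeq, huu]
    · exfalso
      rw [heq1, Sym2.eq_swap] at hr1
      rw [heq2, Sym2.eq_swap, ← hFeq] at hr2
      rw [← hFeq] at ha2
      exact aux_nbr_disjoint T ht.2 ha1.symm ha2.symm huu hr1 hr2
  have hcard1 : S.ncard ≤ (Ω \ {u0}).ncard := by
    rw [← Set.ncard_image_of_injOn hinjOn]
    exact Set.ncard_le_ncard (Set.image_subset_iff.mpr hmaps) (Set.toFinite _)
  have hcard2 : (Ω \ {u0}).ncard + 1 = Ω.ncard :=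
    Set.ncard_diff_singleton_add_one hu0Ω (Set.toFinite _)
  have hΩlt : Ω.ncard < Fintype.card V := by
    have hss : Ω ⊂ Set.univ := Set.ssubset_univ_iff.mpr hproper
    have := Set.ncard_lt_ncard hss Set.finite_univ
    rwa [Set.ncard_univ, Nat.card_eq_fintype_card] at this
  have hE : T.edgeFinset.card + 1 = Fintype.card V := ht.card_edgeFinset
  have hab : S.ncard + 1 ≤ Ω.ncard := by omega
  set a := S.ncard
  set b := Ω.ncard
  set m := T.edgeFinset.card
  have h1 : (m + 1) * (a + 1) ≤ (m + 1) * b := Nat.mul_le_mul_left _ hab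
  nlinarith [h1, hΩlt, hE]


lemma aux_vm (T : SimpleGraph V) [DecidableRel T.Adj] (ht : T.IsTree)
    (w : Sym2 V → ℝ)
    (hw : ∀ a b, T.Adj a b →
      w s(a, b) = Mw T a * (tC T b s(a, b) : ℝ) / ((Fintype.card V : ℝ) - 1))
    (hV : 2 ≤ Fintype.card V) (x : V) : vm T w x = Mw T x := by
  have hsum : (∑ y ∈ T.neighborFinset x, (tC T y s(x, y) : ℝ)) = (Fintype.card V : ℝ) - 1 := by
    have := aux_sum_tc T ht x
    have hcast : ((∑ y ∈ T.neighborFinset x, tC T y s(x, y) : ℕ) : ℝ) + 1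
        = (Fintype.card V : ℝ) := by exact_mod_cast congrArg (Nat.cast : ℕ → ℝ) this
    push_cast at hcast
    linarith
  have hne : (Fintype.card V : ℝ) - 1 ≠ 0 := by
    have : (2 : ℝ) ≤ (Fintype.card V : ℝ) := by exact_mod_cast hV
    linarith
  rw [vm]
  have hterm : ∀ y ∈ T.neighborFinset x,
      w s(x, y) = Mw T x * (tC T y s(x, y) : ℝ) / ((Fintype.card V : ℝ) - 1) := by
    intro y hy
    exact hw x y (by simpa using hy)
  rw [Finset.sum_congr rfl hterm]
  rw [← Finset.sum_div, ← Finset.mul_sum, hsum]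
  field_simp

/-- Every finite tree with at least two vertices satisfies the density condition
`|V|·|E(Ω)| < |E|·|Ω|` for all nonempty proper `Ω ⊊ V`, and consequently admits a weight of
constant curvature `κ_e(ω) = 2/(|V| − 1)`. -/
theorem tree_constant_curvature (T : SimpleGraph V) [DecidableRel T.Adj]
    (htree : T.IsTree) (hV : 2 ≤ Fintype.card V) :
    (∀ Ω : Set V, Ω.Nonempty → Ω ≠ Set.univ →
      Fintype.card V * {e ∈ T.edgeSet | ∀ v ∈ e, v ∈ Ω}.ncard <
        T.edgeFinset.card * Ω.ncard) ∧
    (∃ w : Sym2 V → ℝ, (∀ e ∈ T.edgeFinset, 0 < w e) ∧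
      ∀ e ∈ T.edgeFinset, edgeKappa T w e = 2 / ((Fintype.card V : ℝ) - 1)) := by
  constructor
  · exact fun Ω h1 h2 => aux_part1 T htree Ω h1 h2
  · set n : ℝ := (Fintype.card V : ℝ) with hn
    have hn2 : (2 : ℝ) ≤ n := by rw [hn]; exact_mod_cast hV
    have hne : n - 1 ≠ 0 := by linarith
    set w : Sym2 V → ℝ := Sym2.lift ⟨fun a b =>
        if T.Adj a b then Mw T a * (tC T b s(a, b) : ℝ) / (n - 1) else 1, by
      intro a b
      dsimp only
      by_cases h : T.Adj a b
      · rw [if_pos h, if_pos h.symm, show s(b, a) = s(a, b) from Sym2.eq_swap,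
          aux_Msymm T h]
      · rw [if_neg h, if_neg fun hh => h hh.symm]⟩ with hwdef
    have hw : ∀ a b, T.Adj a b →
        w s(a, b) = Mw T a * (tC T b s(a, b) : ℝ) / (n - 1) := by
      intro a b h
      rw [hwdef, Sym2.lift_mk]
      exact if_pos h
    refine ⟨w, ?_, ?_⟩
    · intro e he
      rw [SimpleGraph.mem_edgeFinset] at he
      revert he
      refine Sym2.ind (fun x y => ?_) e
      intro he
      rw [SimpleGraph.mem_edgeSet] at he
      rw [hw x y he]
      have h1 := aux_Mw_pos T x
      have h2 : (0 : ℝ) < (tC T y s(x, y) : ℝ) := by exact_mod_cast aux_tc_pos T y s(x, y)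
      have h3 : (0 : ℝ) < n - 1 := by linarith
      positivity
    · intro e he
      rw [SimpleGraph.mem_edgeFinset] at he
      revert he
      refine Sym2.ind (fun x y => ?_) e
      intro he
      rw [SimpleGraph.mem_edgeSet] at he
      have hvx : vm T w x = Mw T x := aux_vm T htree w hw hV x
      have hvy : vm T w y = Mw T y := aux_vm T htree w hw hV y
      have hk : edgeKappa T w s(x, y)
          = 2 * w s(x, y) * (1 / vm T w x + 1 / vm T w y) - 2 := by
        rw [edgeKappa, Sym2.lift_mk]
      rw [hk, hvx, hvy]
      have hMx := aux_Mw_pos T x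
      have hMy := aux_Mw_pos T y
      have hwxy := hw x y he
      have hwyx : w s(x, y) = Mw T y * (tC T x s(x, y) : ℝ) / (n - 1) := by
        rw [show s(x, y) = s(y, x) from Sym2.eq_swap, hw y x he.symm,
          show s(y, x) = s(x, y) from Sym2.eq_swap]
      have e1 : w s(x, y) * (1 / Mw T x) = (tC T y s(x, y) : ℝ) / (n - 1) := by
        rw [hwxy]
        field_simp
      have e2 : w s(x, y) * (1 / Mw T y) = (tC T x s(x, y) : ℝ) / (n - 1) := by
        rw [hwyx]
        field_simp
      have hsum : (tC T x s(x, y) : ℝ) + (tC T y s(x, y) : ℝ) = n := by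
        rw [hn]
        exact_mod_cast congrArg (Nat.cast : ℕ → ℝ) (aux_tc_add T htree he)
      calc 2 * w s(x, y) * (1 / Mw T x + 1 / Mw T y) - 2
          = 2 * (w s(x, y) * (1 / Mw T x) + w s(x, y) * (1 / Mw T y)) - 2 := by ring
        _ = 2 * ((tC T y s(x, y) : ℝ) / (n - 1) + (tC T x s(x, y) : ℝ) / (n - 1)) - 2 := by
            rw [e1, e2]
        _ = 2 / (n - 1) := by
            field_simp
            linarith
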